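/- arXiv:math/0311519 — 7 statements merged into one kernel-verified Lean document; each statement's English description precedes it below -/
import Mathlib

section
/- Let H be a Hopf algebra over a commutative ring k and R an H-module algebra. Let I be an H-ideal of R and a ∈ I. Then a is H-regular in I if and only if a is H-regular in R; that is, a can be written as a finite sum Σᵢ (hᵢ · a) bᵢ (hᵢ' · a) with all bᵢ ∈ I if and only if it can be so written with all bᵢ ∈ R. -/
open scoped TensorProduct

variable {k H R : Type*} [CommRing k] [Ring H] [HopfAlgebra k H]
  [NonUnitalRing R] [Module k R] [SMulCommClass k R R] [IsScalarTower k R R]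

/-- `R` is an `H`-module algebra via the `k`-bilinear action `act`: the action is unital,
makes `R` a left `H`-module, and satisfies `h · (a b) = ∑ (h₁ · a)(h₂ · b)`
(the right-hand side being the image of `Δ(h)` under `h₁ ⊗ h₂ ↦ (h₁ · a)(h₂ · b)`). -/
def IsModuleAlgebra (act : H →ₗ[k] R →ₗ[k] R) : Prop :=
  (∀ r : R, act 1 r = r) ∧
  (∀ (g h : H) (r : R), act (g * h) r = act g (act h r)) ∧
  (∀ (h : H) (a b : R),
    act h (a * b) =
      LinearMap.mul' k R
        (TensorProduct.map (act.flip a) (act.flip b) (Coalgebra.comul h)))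

/-- `a` is `H`-(von Neumann) regular with middle factors taken from the set `S`:
`a = ∑ᵢ (hᵢ · a) bᵢ (hᵢ' · a)` with all `bᵢ ∈ S`. -/
def IsHRegularIn (act : H →ₗ[k] R →ₗ[k] R) (S : Set R) (a : R) : Prop :=
  ∃ (n : ℕ) (h h' : Fin n → H) (b : Fin n → R),
    (∀ i, b i ∈ S) ∧ a = ∑ i, act (h i) a * b i * act (h' i) a

/-- `J` is an `H`-ideal of the `H`-module (sub)algebra `S` (take `S = Set.univ`
for `H`-ideals of `R` itself). -/
def IsHIdealIn (act : H →ₗ[k] R →ₗ[k] R) (S J : Set R) : Prop :=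
  J ⊆ S ∧ (0 : R) ∈ J ∧ (∀ x ∈ J, ∀ y ∈ J, x - y ∈ J) ∧
  (∀ (c : k), ∀ x ∈ J, c • x ∈ J) ∧
  (∀ s ∈ S, ∀ x ∈ J, s * x ∈ J ∧ x * s ∈ J) ∧
  (∀ (h : H), ∀ x ∈ J, act h x ∈ J)

/-- The `H`-ideal of `S` generated by `a`. -/
def HIdealGenIn (act : H →ₗ[k] R →ₗ[k] R) (S : Set R) (a : R) : Set R :=
  {x | ∀ J : Set R, IsHIdealIn act S J → a ∈ J → x ∈ J}

/-- The `H`-von Neumann regular radical `r_{Hn}` of the `H`-module (sub)algebra `S`: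
those `a ∈ S` such that every element of the `H`-ideal of `S` generated by `a`
is `H`-regular in `S`. -/
def rHnIn (act : H →ₗ[k] R →ₗ[k] R) (S : Set R) : Set R :=
  {a | a ∈ S ∧ ∀ x ∈ HIdealGenIn act S a, IsHRegularIn act S x}

/-!
Let `H` be a Hopf algebra over a commutative ring `k` and `R` an `H`-module algebra.
Let `I` be an `H`-ideal of `R` and `a ∈ I`.  Then `a` is `H`-regular in `I` if and only
if `a` is `H`-regular in `R`.
-/
theorem isHRegularIn_ideal_iff_isHRegularIn_univ
    (act : H →ₗ[k] R →ₗ[k] R) (hma : IsModuleAlgebra act)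
    (I : Set R) (hI : IsHIdealIn act Set.univ I) (a : R) (ha : a ∈ I) :
    IsHRegularIn act I a ↔ IsHRegularIn act Set.univ a := by
  obtain ⟨hone, hmul, hcomp⟩ := hma
  obtain ⟨hsub, h0, hdiff, hsmul, habs, hact⟩ := hI
  constructor
  · rintro ⟨n, h, h', b, hb, heq⟩
    exact ⟨n, h, h', b, fun i => trivial, heq⟩
  · rintro ⟨n, h, h', b, -, heq⟩
    have hIa : ∀ g : H, act g a ∈ I := fun g => hact g a ha
    -- key: `act g (x * act g' a)` lies in the span of `{c * act g'' a | c ∈ I}`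
    have key : ∀ (g g' : H) (x : R), x ∈ I →
        act g (x * act g' a) ∈
          Submodule.span k {z : R | ∃ c gg, c ∈ I ∧ z = c * act gg a} := by
      intro g g' x hx
      rw [hcomp g x (act g' a)]
      generalize (Coalgebra.comul g : H ⊗[k] H) = t
      induction t using TensorProduct.induction_on with
      | zero => simp
      | tmul p q =>
        rw [TensorProduct.map_tmul, LinearMap.mul'_apply]
        refine Submodule.subset_span ⟨act p x, q * g', hact p x hx, ?_⟩
        simp [hmul, LinearMap.flip_apply]
      | add u v hu hv =>
        rw [map_add, map_add]
        exact Submodule.add_mem _ hu hv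
    -- hence each `act g a` lies in that span
    have haM' : ∀ g : H, act g a ∈
        Submodule.span k {z : R | ∃ c gg, c ∈ I ∧ z = c * act gg a} := by
      intro g
      have e : act g a = ∑ i, act g (act (h i) a * b i * act (h' i) a) := by
        conv_lhs => rw [heq]
        rw [map_sum]
      rw [e]
      exact Submodule.sum_mem _ fun i _ =>
        key g (h' i) _ ((habs (b i) trivial _ (hIa (h i))).2)
    -- hence `a` lies in the span of `{act g a * c * act g' a | c ∈ I}`
    have haM : a ∈ Submodule.span k
        {z : R | ∃ g c g', c ∈ I ∧ z = act g a * c * act g' a} := by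
      have hsum : (∑ i, act (h i) a * b i * act (h' i) a) ∈ Submodule.span k
          {z : R | ∃ g c g', c ∈ I ∧ z = act g a * c * act g' a} := by
        refine Submodule.sum_mem _ fun i _ => ?_
        have himg : (LinearMap.mulLeft k (act (h i) a * b i)) (act (h' i) a) ∈
            Submodule.span k {z : R | ∃ g c g', c ∈ I ∧ z = act g a * c * act g' a} := by
          refine Submodule.span_induction ?_ ?_ ?_ ?_ (haM' (h' i))
          · rintro z ⟨c, gg, hc, rfl⟩
            refine Submodule.subset_span ⟨h i, b i * c, gg,
              (habs (b i) trivial c hc).1, ?_⟩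
            simp [LinearMap.mulLeft_apply, mul_assoc]
          · simp
          · intro x y _ _ hx hy
            rw [map_add]; exact Submodule.add_mem _ hx hy
          · intro c x _ hx
            rw [map_smul]; exact Submodule.smul_mem _ c hx
        simpa [LinearMap.mulLeft_apply, mul_assoc] using himg
      rwa [← heq] at hsum
    -- finally, extract a representation with middle factors in `I`
    have claim : ∀ z ∈ Submodule.span k
        {z : R | ∃ g c g', c ∈ I ∧ z = act g a * c * act g' a},
        ∃ (m : ℕ) (f f' : Fin m → H) (c : Fin m → R),
          (∀ i, c i ∈ I) ∧ z = ∑ i, act (f i) a * c i * act (f' i) a := by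
      intro z hz
      refine Submodule.span_induction ?_ ?_ ?_ ?_ hz
      · rintro w ⟨g, c, g', hc, rfl⟩
        exact ⟨1, fun _ => g, fun _ => g', fun _ => c, fun _ => hc, by simp⟩
      · exact ⟨0, fun i => i.elim0, fun i => i.elim0, fun i => i.elim0,
          fun i => i.elim0, by simp⟩
      · rintro x y _ _ ⟨m, f, f', c, hc, rfl⟩ ⟨m', g, g', d, hd, rfl⟩
        refine ⟨m + m', Fin.append f g, Fin.append f' g', Fin.append c d, ?_, ?_⟩
        · intro i
          refine i.addCases (fun j => ?_) (fun j => ?_)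
          · simpa [Fin.append_left] using hc j
          · simpa [Fin.append_right] using hd j
        · simp [Fin.sum_univ_add, Fin.append_left, Fin.append_right]
      · rintro r x _ ⟨m, f, f', c, hc, rfl⟩
        refine ⟨m, f, f', fun i => r • c i, fun i => hsmul r _ (hc i), ?_⟩
        rw [Finset.smul_sum]
        refine Finset.sum_congr rfl fun i _ => ?_
        rw [mul_smul_comm, smul_mul_assoc]
    obtain ⟨m, f, f', c, hc, hrep⟩ := claim a haM
    exact ⟨m, f, f', c, hc, hrep⟩
end

section
/- Let H be a Hopf algebra over a commutative ring k and R an H-module algebra. Let x ∈ R, and let h₁,…,h_n, h₁',…,h_n' ∈ H and b₁,…,b_n ∈ R. If the element x − Σᵢ (hᵢ · x) bᵢ (hᵢ' · x) is H-regular, then x is H-regular. -/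
open scoped TensorProduct

variable {k H R : Type*} [CommRing k] [Ring H] [HopfAlgebra k H]
  [NonUnitalRing R] [Module k R] [SMulCommClass k R R] [IsScalarTower k R R]

/-!
Let `H` be a Hopf algebra over a commutative ring `k` and `R` an `H`-module algebra.
Let `x ∈ R`, `h₁, …, h_n, h₁', …, h_n' ∈ H` and `b₁, …, b_n ∈ R`.
If the element `x − ∑ᵢ (hᵢ · x) bᵢ (hᵢ' · x)` is `H`-regular, then `x` is `H`-regular.
-/
theorem isHRegular_of_sub_isHRegular
    (act : H →ₗ[k] R →ₗ[k] R) (hma : IsModuleAlgebra act)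
    (x : R) (n : ℕ) (h h' : Fin n → H) (b : Fin n → R)
    (hreg : IsHRegularIn act Set.univ (x - ∑ i, act (h i) x * b i * act (h' i) x)) :
    IsHRegularIn act Set.univ x := by
  classical
  set y := x - ∑ i, act (h i) x * b i * act (h' i) x with hy_def
  obtain ⟨m, g, g', c, -, hy⟩ := hreg
  let SP : Set R := {w | ∃ (u v : H) (r : R), w = act u x * r * act v x}
  let SL : Set R := {w | (∃ u : H, w = act u x) ∨ ∃ (u : H) (r : R), w = act u x * r}
  let SR : Set R := {w | (∃ u : H, w = act u x) ∨ ∃ (u : H) (r : R), w = r * act u x}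
  have tL : ∀ (t : H ⊗[k] H) (u : H) (cc : R),
      LinearMap.mul' k R (TensorProduct.map (act.flip (act u x)) (act.flip cc) t)
        ∈ Submodule.span k SL := by
    intro t u cc
    induction t using TensorProduct.induction_on with
    | zero => rw [map_zero, map_zero]; exact Submodule.zero_mem _
    | tmul a e =>
        simp only [TensorProduct.map_tmul, LinearMap.mul'_apply, LinearMap.flip_apply]
        exact Submodule.subset_span (Or.inr ⟨a * u, act e cc, by rw [hma.2.1]⟩)
    | add s t hs ht =>
        rw [map_add, map_add]
        exact Submodule.add_mem _ hs ht
  have tR : ∀ (t : H ⊗[k] H) (u : H) (cc : R),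
      LinearMap.mul' k R (TensorProduct.map (act.flip cc) (act.flip (act u x)) t)
        ∈ Submodule.span k SR := by
    intro t u cc
    induction t using TensorProduct.induction_on with
    | zero => rw [map_zero, map_zero]; exact Submodule.zero_mem _
    | tmul a e =>
        simp only [TensorProduct.map_tmul, LinearMap.mul'_apply, LinearMap.flip_apply]
        exact Submodule.subset_span (Or.inr ⟨e * u, act a cc, by rw [hma.2.1]⟩)
    | add s t hs ht =>
        rw [map_add, map_add]
        exact Submodule.add_mem _ hs ht
  have hgyL : ∀ g0 : H, act g0 y ∈ Submodule.span k SL := by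
    intro g0
    have e : act g0 y = act g0 x - ∑ i, act g0 (act (h i) x * (b i * act (h' i) x)) := by
      simp only [hy_def, map_sub, map_sum, mul_assoc]
    rw [e]
    refine Submodule.sub_mem _ (Submodule.subset_span (Or.inl ⟨g0, rfl⟩))
      (Submodule.sum_mem _ fun i _ => ?_)
    rw [hma.2.2]
    exact tL _ _ _
  have hgyR : ∀ g0 : H, act g0 y ∈ Submodule.span k SR := by
    intro g0
    have e : act g0 y = act g0 x - ∑ i, act g0 ((act (h i) x * b i) * act (h' i) x) := by
      simp only [hy_def, map_sub, map_sum]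
    rw [e]
    refine Submodule.sub_mem _ (Submodule.subset_span (Or.inl ⟨g0, rfl⟩))
      (Submodule.sum_mem _ fun i _ => ?_)
    rw [hma.2.2]
    exact tR _ _ _
  have keymul : ∀ (cc : R), ∀ u ∈ Submodule.span k SL, ∀ v ∈ Submodule.span k SR,
      u * cc * v ∈ Submodule.span k SP := by
    intro cc u hu
    induction hu using Submodule.span_induction with
    | mem w hw =>
        intro v hv
        induction hv using Submodule.span_induction with
        | mem z hz =>
            obtain ⟨u1, rfl⟩ | ⟨u1, r1, rfl⟩ := hw <;>
              obtain ⟨v1, rfl⟩ | ⟨v1, r2, rfl⟩ := hz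
            · exact Submodule.subset_span ⟨u1, v1, cc, rfl⟩
            · exact Submodule.subset_span ⟨u1, v1, cc * r2, by simp only [mul_assoc]⟩
            · exact Submodule.subset_span ⟨u1, v1, r1 * cc, by simp only [mul_assoc]⟩
            · exact Submodule.subset_span ⟨u1, v1, r1 * cc * r2, by simp only [mul_assoc]⟩
        | zero => rw [mul_zero]; exact Submodule.zero_mem _
        | add v1 v2 _ _ h1 h2 => rw [mul_add]; exact Submodule.add_mem _ h1 h2
        | smul a v1 _ h1 => rw [mul_smul_comm]; exact Submodule.smul_mem _ _ h1
    | zero => intro v hv; rw [zero_mul, zero_mul]; exact Submodule.zero_mem _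
    | add u1 u2 _ _ h1 h2 =>
        intro v hv
        rw [add_mul, add_mul]
        exact Submodule.add_mem _ (h1 v hv) (h2 v hv)
    | smul a u1 _ h1 =>
        intro v hv
        rw [smul_mul_assoc, smul_mul_assoc]
        exact Submodule.smul_mem _ _ (h1 v hv)
  have hxP : x ∈ Submodule.span k SP := by
    have ex : x = y + ∑ i, act (h i) x * b i * act (h' i) x := by
      rw [hy_def, sub_add_cancel]
    rw [ex]
    refine Submodule.add_mem _ ?_
      (Submodule.sum_mem _ fun i _ => Submodule.subset_span ⟨h i, h' i, b i, rfl⟩)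
    rw [hy]
    exact Submodule.sum_mem _ fun j _ => keymul (c j) _ (hgyL (g j)) _ (hgyR (g' j))
  have extract : ∀ z, z ∈ Submodule.span k SP →
      ∃ (N : ℕ) (u u' : Fin N → H) (r : Fin N → R),
        z = ∑ i, act (u i) x * r i * act (u' i) x := by
    intro z hz
    induction hz using Submodule.span_induction with
    | mem w hw =>
        obtain ⟨u1, v1, r1, rfl⟩ := hw
        exact ⟨1, fun _ => u1, fun _ => v1, fun _ => r1, by simp⟩
    | zero => exact ⟨0, Fin.elim0, Fin.elim0, Fin.elim0, by simp⟩
    | add z1 z2 _ _ h1 h2 =>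
        obtain ⟨N1, u1, u1', r1, e1⟩ := h1
        obtain ⟨N2, u2, u2', r2, e2⟩ := h2
        refine ⟨N1 + N2, Fin.append u1 u2, Fin.append u1' u2', Fin.append r1 r2, ?_⟩
        rw [Fin.sum_univ_add]
        simp only [Fin.append_left, Fin.append_right]
        rw [← e1, ← e2]
    | smul a z1 _ h1 =>
        obtain ⟨N, u, u', r, e⟩ := h1
        refine ⟨N, fun i => a • u i, u', r, ?_⟩
        rw [e, Finset.smul_sum]
        exact Finset.sum_congr rfl fun i _ => by
          rw [map_smul, LinearMap.smul_apply, smul_mul_assoc, smul_mul_assoc]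
  obtain ⟨N, u, u', r, hx⟩ := extract x hxP
  exact ⟨N, u, u', r, fun i => trivial, hx⟩
end

section
/- Let H be a Hopf algebra over a commutative ring k and R an H-module algebra. Then the set r_Hn(R) := { a ∈ R : every element of the H-ideal of R generated by a is H-regular } is an H-ideal of R; in particular it is closed under subtraction, satisfies R·r_Hn(R) ⊆ r_Hn(R) and r_Hn(R)·R ⊆ r_Hn(R), and h · r_Hn(R) ⊆ r_Hn(R) for all h ∈ H. -/
open scoped TensorProduct

variable {k H R : Type*} [CommRing k] [Ring H] [HopfAlgebra k H]
  [NonUnitalRing R] [Module k R] [SMulCommClass k R R] [IsScalarTower k R R]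

/-!
Closure of `r_Hn(R)` under multiples and the `H`-action is immediate, since the `H`-ideal
generated by `r a`, `a r` or `h · a` lies in the one generated by `a`. For `a - b`, an element
`x` of the `H`-ideal generated by `a - b` splits as `u + v` with `u ∈ (a)` and `v ∈ (b)`.
Reusing the coefficients of a regularity expression `u = ∑ (hᵢ · u) cᵢ (hᵢ' · u)` gives
`w = ∑ (hᵢ · x) cᵢ (hᵢ' · x)` with `x - w ∈ (b)`, so `x - w` is `H`-regular. As `w` lies in the
additive span of `(H·x) R (H·x)`, the module-algebra axiom puts `(H·(x - w)) R (H·(x - w))` into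
that span as well, hence `x = w + (x - w)` lies in it, i.e. `x` is `H`-regular.
-/

set_option linter.unusedSectionVars false

open scoped Pointwise

section

variable {act : H →ₗ[k] R →ₗ[k] R}

namespace IsHIdealIn

variable {S J : Set R}

lemma add_mem (hJ : IsHIdealIn act S J) {x y : R} (hx : x ∈ J) (hy : y ∈ J) :
    x + y ∈ J := by
  simpa using hJ.2.2.1 x hx (0 - y) (hJ.2.2.1 0 hJ.2.1 y hy)

lemma neg_mem (hJ : IsHIdealIn act S J) {x : R} (hx : x ∈ J) : -x ∈ J := by
  simpa using hJ.2.2.1 0 hJ.2.1 x hx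

def toAddSubgroup (hJ : IsHIdealIn act S J) : AddSubgroup R where
  carrier := J
  zero_mem' := hJ.2.1
  add_mem' := hJ.add_mem
  neg_mem' := hJ.neg_mem

lemma mul_mul_sub_mul_mul_mem (hJ : IsHIdealIn act Set.univ J) {p p' q q' : R}
    (hp : p - p' ∈ J) (hq : q - q' ∈ J) (c : R) : p * c * q - p' * c * q' ∈ J := by
  have hsplit : p * c * q - p' * c * q' = (p - p') * (c * q) + p' * c * (q - q') := by
    noncomm_ring
  rw [hsplit]
  exact hJ.add_mem (hJ.2.2.2.2.1 _ trivial _ hp).2 (hJ.2.2.2.2.1 _ trivial _ hq).1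

lemma add {I : Set R} (hI : IsHIdealIn act Set.univ I) (hJ : IsHIdealIn act Set.univ J) :
    IsHIdealIn act Set.univ (I + J) := by
  refine ⟨Set.subset_univ _, ⟨0, hI.2.1, 0, hJ.2.1, add_zero 0⟩, ?_, ?_, ?_, ?_⟩
  · rintro _ ⟨u, hu, v, hv, rfl⟩ _ ⟨u', hu', v', hv', rfl⟩
    exact ⟨u - u', hI.2.2.1 u hu u' hu', v - v', hJ.2.2.1 v hv v' hv', sub_add_sub_comm u u' v v'⟩
  · rintro c _ ⟨u, hu, v, hv, rfl⟩
    exact ⟨c • u, hI.2.2.2.1 c u hu, c • v, hJ.2.2.2.1 c v hv, (smul_add c u v).symm⟩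
  · rintro s - _ ⟨u, hu, v, hv, rfl⟩
    obtain ⟨hsu, hus⟩ := hI.2.2.2.2.1 s trivial u hu
    obtain ⟨hsv, hvs⟩ := hJ.2.2.2.2.1 s trivial v hv
    exact ⟨⟨s * u, hsu, s * v, hsv, (mul_add s u v).symm⟩,
      ⟨u * s, hus, v * s, hvs, (add_mul u v s).symm⟩⟩
  · rintro g _ ⟨u, hu, v, hv, rfl⟩
    exact ⟨act g u, hI.2.2.2.2.2 g u hu, act g v, hJ.2.2.2.2.2 g v hv, (map_add _ u v).symm⟩

end IsHIdealIn

lemma isHIdealIn_hIdealGenIn (a : R) : IsHIdealIn act Set.univ (HIdealGenIn act Set.univ a) := by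
  refine ⟨Set.subset_univ _, fun J hJ _ => hJ.2.1, ?_, ?_, ?_, ?_⟩
  · exact fun x hx y hy J hJ ha => hJ.2.2.1 x (hx J hJ ha) y (hy J hJ ha)
  · exact fun c x hx J hJ ha => hJ.2.2.2.1 c x (hx J hJ ha)
  · exact fun s _ x hx => ⟨fun J hJ ha => (hJ.2.2.2.2.1 s trivial x (hx J hJ ha)).1,
      fun J hJ ha => (hJ.2.2.2.2.1 s trivial x (hx J hJ ha)).2⟩
  · exact fun h x hx J hJ ha => hJ.2.2.2.2.2 h x (hx J hJ ha)

lemma mem_hIdealGenIn_self (S : Set R) (a : R) : a ∈ HIdealGenIn act S a := fun _ _ ha => ha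

lemma hIdealGenIn_subset {S : Set R} {a b : R} (hb : b ∈ HIdealGenIn act S a) :
    HIdealGenIn act S b ⊆ HIdealGenIn act S a :=
  fun _ hx J hJ ha => hx J hJ (hb J hJ ha)

lemma mem_rHnIn_of_mem_hIdealGenIn {a b : R} (ha : a ∈ rHnIn act Set.univ)
    (hb : b ∈ HIdealGenIn act Set.univ a) : b ∈ rHnIn act Set.univ :=
  ⟨trivial, fun x hx => ha.2 x (hIdealGenIn_subset hb hx)⟩

lemma zero_mem_rHnIn : (0 : R) ∈ rHnIn act Set.univ := by
  have hzero : IsHIdealIn act Set.univ {(0 : R)} := by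
    refine ⟨Set.subset_univ _, rfl, ?_, ?_, ?_, ?_⟩ <;> simp
  refine ⟨trivial, fun x hx => ?_⟩
  obtain rfl : x = 0 := hx _ hzero rfl
  exact ⟨0, ![], ![], ![], nofun, by simp⟩

lemma IsModuleAlgebra.exists_act_mul_eq_sum (hma : IsModuleAlgebra act) (g : H) (p q : R) :
    ∃ S : Finset (H × H), act g (p * q) = ∑ z ∈ S, act z.1 p * act z.2 q := by
  obtain ⟨S, hS⟩ := TensorProduct.exists_finset (Coalgebra.comul (R := k) g)
  refine ⟨S, ?_⟩
  simp [hma.2.2, hS, map_sum, TensorProduct.map_tmul, LinearMap.mul'_apply]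

variable (act) in
/-- The additive span of `(H·a) R (H·a)`. -/
def sandwiches (a : R) : AddSubgroup R where
  carrier := {z | ∃ (n : ℕ) (h h' : Fin n → H) (b : Fin n → R),
    z = ∑ i, act (h i) a * b i * act (h' i) a}
  zero_mem' := ⟨0, ![], ![], ![], by simp⟩
  add_mem' := by
    rintro _ _ ⟨n, h, h', b, rfl⟩ ⟨m, g, g', c, rfl⟩
    exact ⟨n + m, Fin.append h g, Fin.append h' g', Fin.append b c, by
      simp [Fin.sum_univ_add, Fin.append_left, Fin.append_right]⟩
  neg_mem' := by
    rintro _ ⟨n, h, h', b, rfl⟩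
    exact ⟨n, h, h', fun i => -b i, by simp⟩

lemma isHRegularIn_univ_iff {x : R} : IsHRegularIn act Set.univ x ↔ x ∈ sandwiches act x :=
  ⟨fun ⟨n, h, h', b, _, hx⟩ => ⟨n, h, h', b, hx⟩,
    fun ⟨n, h, h', b, hx⟩ => ⟨n, h, h', b, fun _ => trivial, hx⟩⟩

lemma mul_mul_mem_sandwiches (a : R) (g g' : H) (b : R) :
    act g a * b * act g' a ∈ sandwiches act a :=
  ⟨1, ![g], ![g'], ![b], by simp⟩

variable (act) in
/-- Since `R` need not be unital, `act h a` itself is needed besides the `act h a * r`. -/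
def leftFactors (a : R) : AddSubgroup R :=
  AddSubgroup.closure {s | (∃ h : H, s = act h a) ∨ ∃ (h : H) (r : R), s = act h a * r}

variable (act) in
def rightFactors (a : R) : AddSubgroup R :=
  AddSubgroup.closure {t | ∃ (h : H) (r : R), t = r * act h a}

lemma act_mem_leftFactors (a : R) (g : H) : act g a ∈ leftFactors act a :=
  AddSubgroup.subset_closure (Or.inl ⟨g, rfl⟩)

lemma act_mul_mem_leftFactors (a : R) (g : H) (r : R) : act g a * r ∈ leftFactors act a :=
  AddSubgroup.subset_closure (Or.inr ⟨g, r, rfl⟩)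

lemma mul_act_mem_rightFactors (a : R) (g : H) (r : R) : r * act g a ∈ rightFactors act a :=
  AddSubgroup.subset_closure ⟨g, r, rfl⟩

lemma sandwiches_le_leftFactors (a : R) : sandwiches act a ≤ leftFactors act a := by
  rintro _ ⟨n, h, h', b, rfl⟩
  exact sum_mem fun i _ => mul_assoc (act (h i) a) (b i) _ ▸ act_mul_mem_leftFactors a _ _

lemma sandwiches_le_rightFactors (a : R) : sandwiches act a ≤ rightFactors act a := by
  rintro _ ⟨n, h, h', b, rfl⟩
  exact sum_mem fun i _ => mul_act_mem_rightFactors a _ _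

lemma mul_mem_rightFactors (r : R) {a t : R} (ht : t ∈ rightFactors act a) :
    r * t ∈ rightFactors act a := by
  refine (AddSubgroup.closure_le
    (K := (rightFactors act a).comap (AddMonoidHom.mulLeft r))).2 ?_ ht
  rintro _ ⟨h, r', rfl⟩
  simpa [← mul_assoc] using mul_act_mem_rightFactors a h (r * r')

lemma act_mem_leftFactors_of_mem (hma : IsModuleAlgebra act) (g : H) {a s : R}
    (hs : s ∈ leftFactors act a) : act g s ∈ leftFactors act a := by
  refine (AddSubgroup.closure_le
    (K := (leftFactors act a).comap (act g).toAddMonoidHom)).2 ?_ hs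
  rintro _ (⟨h, rfl⟩ | ⟨h, r, rfl⟩)
  · simpa [← hma.2.1] using act_mem_leftFactors a (g * h)
  · obtain ⟨S, hS⟩ := hma.exists_act_mul_eq_sum g (act h a) r
    simpa [hS, ← hma.2.1] using sum_mem fun z _ => act_mul_mem_leftFactors a (z.1 * h) (act z.2 r)

lemma act_mem_rightFactors_of_mem (hma : IsModuleAlgebra act) (g : H) {a t : R}
    (ht : t ∈ rightFactors act a) : act g t ∈ rightFactors act a := by
  refine (AddSubgroup.closure_le
    (K := (rightFactors act a).comap (act g).toAddMonoidHom)).2 ?_ ht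
  rintro _ ⟨h, r, rfl⟩
  obtain ⟨S, hS⟩ := hma.exists_act_mul_eq_sum g r (act h a)
  simpa [hS, ← hma.2.1] using sum_mem fun z _ => mul_act_mem_rightFactors a (z.2 * h) (act z.1 r)

lemma mul_mem_sandwiches {a s t : R} (hs : s ∈ leftFactors act a) (ht : t ∈ rightFactors act a) :
    s * t ∈ sandwiches act a := by
  refine (AddSubgroup.closure_le
    (K := (sandwiches act a).comap (AddMonoidHom.mulRight t))).2 ?_ hs
  intro x hx
  refine (AddSubgroup.closure_le
    (K := (sandwiches act a).comap (AddMonoidHom.mulLeft x))).2 ?_ ht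
  rintro _ ⟨h', r, rfl⟩
  rcases hx with ⟨h, rfl⟩ | ⟨h, r', rfl⟩
  · simpa [mul_assoc] using mul_mul_mem_sandwiches a h h' r
  · simpa [mul_assoc] using mul_mul_mem_sandwiches a h h' (r' * r)

lemma sandwiches_sub_le (hma : IsModuleAlgebra act) {x w : R} (hw : w ∈ sandwiches act x) :
    sandwiches act (x - w) ≤ sandwiches act x := by
  rintro _ ⟨n, h, h', b, rfl⟩
  refine sum_mem fun i _ => mul_assoc (act (h i) (x - w)) (b i) _ ▸ mul_mem_sandwiches ?_ ?_
  · rw [map_sub]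
    exact sub_mem (act_mem_leftFactors x _)
      (act_mem_leftFactors_of_mem hma _ (sandwiches_le_leftFactors x hw))
  · rw [map_sub, mul_sub]
    exact sub_mem (mul_act_mem_rightFactors x _ _)
      (mul_mem_rightFactors _ (act_mem_rightFactors_of_mem hma _ (sandwiches_le_rightFactors x hw)))

lemma isHRegularIn_of_sub (hma : IsModuleAlgebra act) {x w : R} (hw : w ∈ sandwiches act x)
    (hxw : IsHRegularIn act Set.univ (x - w)) : IsHRegularIn act Set.univ x := by
  rw [isHRegularIn_univ_iff] at hxw ⊢
  simpa using add_mem hw (sandwiches_sub_le hma hw hxw)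

lemma exists_mem_sandwiches_sub_mem {J : Set R} (hJ : IsHIdealIn act Set.univ J) {x u : R}
    (hu : IsHRegularIn act Set.univ u) (hxu : x - u ∈ J) :
    ∃ w ∈ sandwiches act x, x - w ∈ J := by
  obtain ⟨n, h, h', c, -, hu_eq⟩ := hu
  refine ⟨∑ i, act (h i) x * c i * act (h' i) x, ⟨n, h, h', c, rfl⟩, ?_⟩
  have hact : ∀ g, act g x - act g u ∈ J := fun g => map_sub (act g) x u ▸ hJ.2.2.2.2.2 g _ hxu
  have hsplit : x - ∑ i, act (h i) x * c i * act (h' i) x = (x - u) -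
      ∑ i, (act (h i) x * c i * act (h' i) x - act (h i) u * c i * act (h' i) u) := by
    rw [Finset.sum_sub_distrib, ← hu_eq]
    abel
  rw [hsplit]
  change _ ∈ hJ.toAddSubgroup
  exact sub_mem hxu (sum_mem fun i _ => hJ.mul_mul_sub_mul_mul_mem (hact _) (hact _) (c i))

lemma sub_mem_rHnIn (hma : IsModuleAlgebra act) {a b : R} (ha : a ∈ rHnIn act Set.univ)
    (hb : b ∈ rHnIn act Set.univ) : a - b ∈ rHnIn act Set.univ := by
  have hGa := isHIdealIn_hIdealGenIn (act := act) a
  have hGb := isHIdealIn_hIdealGenIn (act := act) b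
  have hab : a - b ∈ HIdealGenIn act Set.univ a + HIdealGenIn act Set.univ b :=
    ⟨a, mem_hIdealGenIn_self _ a, -b, hGb.neg_mem (mem_hIdealGenIn_self _ b),
      (sub_eq_add_neg a b).symm⟩
  refine ⟨trivial, fun x hx => ?_⟩
  obtain ⟨u, hu, v, hv, rfl⟩ := hx _ (hGa.add hGb) hab
  obtain ⟨w, hw, hxw⟩ :=
    exists_mem_sandwiches_sub_mem hGb (ha.2 u hu) (by rwa [add_sub_cancel_left])
  exact isHRegularIn_of_sub hma hw (hb.2 _ hxw)

lemma isHIdealIn_rHnIn (hma : IsModuleAlgebra act) :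
    IsHIdealIn act Set.univ (rHnIn act Set.univ) := by
  have hgen (a : R) := isHIdealIn_hIdealGenIn (act := act) a
  refine ⟨Set.subset_univ _, zero_mem_rHnIn, fun a ha b hb => sub_mem_rHnIn hma ha hb,
    fun c a ha => ?_, fun s _ a ha => ⟨?_, ?_⟩, fun h a ha => ?_⟩ <;>
    refine mem_rHnIn_of_mem_hIdealGenIn ha ?_
  · exact (hgen a).2.2.2.1 c a (mem_hIdealGenIn_self _ a)
  · exact ((hgen a).2.2.2.2.1 s trivial a (mem_hIdealGenIn_self _ a)).1
  · exact ((hgen a).2.2.2.2.1 s trivial a (mem_hIdealGenIn_self _ a)).2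
  · exact (hgen a).2.2.2.2.2 h a (mem_hIdealGenIn_self _ a)

end

theorem rHn_isHIdeal
    (act : H →ₗ[k] R →ₗ[k] R) (hma : IsModuleAlgebra act) :
    IsHIdealIn act Set.univ (rHnIn act Set.univ) ∧
    (∀ a ∈ rHnIn act Set.univ, ∀ b ∈ rHnIn act Set.univ, a - b ∈ rHnIn act Set.univ) ∧
    (∀ r : R, ∀ a ∈ rHnIn act Set.univ, r * a ∈ rHnIn act Set.univ) ∧
    (∀ r : R, ∀ a ∈ rHnIn act Set.univ, a * r ∈ rHnIn act Set.univ) ∧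
    (∀ h : H, ∀ a ∈ rHnIn act Set.univ, act h a ∈ rHnIn act Set.univ) := by
  have hI := isHIdealIn_rHnIn hma
  exact ⟨hI, hI.2.2.1, fun r a ha => (hI.2.2.2.2.1 r trivial a ha).1,
    fun r a ha => (hI.2.2.2.2.1 r trivial a ha).2, hI.2.2.2.2.2⟩
end

section
/- Let H be a Hopf algebra over a commutative ring k and R an H-module algebra, and let r_Hn(R) be its H-von Neumann regular radical. Then the H-von Neumann regular radical of the quotient H-module algebra R/r_Hn(R) is zero; equivalently, if b ∈ R is such that the coset b + r_Hn(R) lies in r_Hn(R/r_Hn(R)), then b ∈ r_Hn(R). -/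
open scoped TensorProduct

variable {k H R : Type*} [CommRing k] [Ring H] [HopfAlgebra k H]
  [NonUnitalRing R] [Module k R] [SMulCommClass k R R] [IsScalarTower k R R]

section Aux

set_option linter.unusedSectionVars false

variable (act : H →ₗ[k] R →ₗ[k] R)

/-- Generators of the span `(H·x) R (H·x)`. -/
def GsetX (x : R) : Set R := {y | ∃ (h h' : H) (b : R), y = act h x * b * act h' x}

/-- Generators of the span `(H·x) R`. -/
def LsetX (x : R) : Set R := {y | ∃ (h : H) (b : R), y = act h x * b}

/-- Generators of the span `R (H·x)`. -/
def RsetX (x : R) : Set R := {y | ∃ (h : H) (b : R), y = b * act h x}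

variable {act}

lemma act_prod_mem (hma : IsModuleAlgebra act) {M : Submodule k R} (a b : R) (g : H)
    (H1 : ∀ g1 g2 : H, act g1 a * act g2 b ∈ M) : act g (a * b) ∈ M := by
  rw [hma.2.2]
  generalize (Coalgebra.comul g : H ⊗[k] H) = t
  induction t using TensorProduct.induction_on with
  | zero => simpa using M.zero_mem
  | tmul g1 g2 => simpa using H1 g1 g2
  | add u v hu hv => rw [map_add, map_add]; exact M.add_mem hu hv

lemma act_gen_mem_L (hma : IsModuleAlgebra act) (x : R) (g h h' : H) (c : R) :
    act g (act h x * c * act h' x) ∈ Submodule.span k (LsetX act x) := by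
  rw [mul_assoc]
  refine act_prod_mem hma _ _ g fun g1 g2 => Submodule.subset_span ?_
  exact ⟨g1 * h, act g2 (c * act h' x), by rw [hma.2.1]⟩

lemma act_gen_mem_R (hma : IsModuleAlgebra act) (x : R) (g h h' : H) (c : R) :
    act g (act h x * c * act h' x) ∈ Submodule.span k (RsetX act x) := by
  refine act_prod_mem hma _ _ g fun g1 g2 => Submodule.subset_span ?_
  exact ⟨g2 * h', act g1 (act h x * c), by rw [hma.2.1]⟩

lemma Lspan_mul_right {x u : R} (hu : u ∈ Submodule.span k (LsetX act x)) (e : R) :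
    u * e ∈ Submodule.span k (LsetX act x) := by
  have hle : Submodule.span k (LsetX act x) ≤
      Submodule.comap (LinearMap.mulRight k e) (Submodule.span k (LsetX act x)) := by
    rw [Submodule.span_le]
    rintro _ ⟨h, b, rfl⟩
    exact Submodule.subset_span ⟨h, b * e, by simp [mul_assoc]⟩
  exact hle hu

lemma Lset_mul_Rspan {x u v : R} (hu : u ∈ LsetX act x)
    (hv : v ∈ Submodule.span k (RsetX act x)) :
    u * v ∈ Submodule.span k (GsetX act x) := by
  obtain ⟨h, b, rfl⟩ := hu
  have hle : Submodule.span k (RsetX act x) ≤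
      Submodule.comap (LinearMap.mulLeft k (act h x * b)) (Submodule.span k (GsetX act x)) := by
    rw [Submodule.span_le]
    rintro _ ⟨h', c, rfl⟩
    exact Submodule.subset_span ⟨h, h', b * c, by simp [mul_assoc]⟩
  exact hle hv

lemma Lspan_mul_Rspan {x u v : R} (hu : u ∈ Submodule.span k (LsetX act x))
    (hv : v ∈ Submodule.span k (RsetX act x)) :
    u * v ∈ Submodule.span k (GsetX act x) := by
  have hle : Submodule.span k (LsetX act x) ≤
      Submodule.comap (LinearMap.mulRight k v) (Submodule.span k (GsetX act x)) := by
    rw [Submodule.span_le]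
    intro u' hu'
    exact Lset_mul_Rspan hu' hv
  exact hle hu

lemma rep_of_mem_span {x y : R} (hy : y ∈ Submodule.span k (GsetX act x)) :
    ∃ (n : ℕ) (h h' : Fin n → H) (b : Fin n → R),
      y = ∑ i, act (h i) x * b i * act (h' i) x := by
  induction hy using Submodule.span_induction with
  | mem y hy =>
    obtain ⟨h, h', b, rfl⟩ := hy
    exact ⟨1, fun _ => h, fun _ => h', fun _ => b, by simp⟩
  | zero => exact ⟨0, Fin.elim0, Fin.elim0, Fin.elim0, by simp⟩
  | add y z hy hz ihy ihz =>
    obtain ⟨n, h, h', b, rfl⟩ := ihy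
    obtain ⟨m, g, g', c, rfl⟩ := ihz
    exact ⟨n + m, Fin.append h g, Fin.append h' g', Fin.append b c, by
      rw [Fin.sum_univ_add]; simp [Fin.append_left, Fin.append_right]⟩
  | smul a y hy ihy =>
    obtain ⟨n, h, h', b, rfl⟩ := ihy
    exact ⟨n, h, h', fun i => a • b i, by
      rw [Finset.smul_sum]
      exact Finset.sum_congr rfl fun i _ => by rw [mul_smul_comm, smul_mul_assoc]⟩

end Aux

/-!
Let `H` be a Hopf algebra over a commutative ring `k` and `R` an `H`-module algebra, with
`H`-von Neumann regular radical `r_{Hn}(R)`.  Then the `H`-von Neumann regular radical of the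
quotient `H`-module algebra `R / r_{Hn}(R)` is zero.

The quotient `R / r_{Hn}(R)` is modelled by an `H`-module algebra `R'` together with a
surjective `k`-algebra homomorphism `π : R → R'` commuting with the `H`-actions whose kernel
is exactly `r_{Hn}(R)`.  The conclusion says `r_{Hn}(R') = 0`; equivalently (the second
conjunct), if `b ∈ R` is such that the coset `π b` of `b` lies in `r_{Hn}(R/r_{Hn}(R))`,
then `b ∈ r_{Hn}(R)`.
-/
theorem rHn_quotient_eq_zero
    {R' : Type*} [NonUnitalRing R'] [Module k R']
    [SMulCommClass k R' R'] [IsScalarTower k R' R']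
    (act : H →ₗ[k] R →ₗ[k] R) (act' : H →ₗ[k] R' →ₗ[k] R')
    (hma : IsModuleAlgebra act) (hma' : IsModuleAlgebra act')
    (π : R →ₙₐ[k] R') (hsurj : Function.Surjective π)
    (hker : ∀ x : R, π x = 0 ↔ x ∈ rHnIn act Set.univ)
    (hequiv : ∀ (h : H) (x : R), π (act h x) = act' h (π x)) :
    (∀ y ∈ rHnIn act' Set.univ, y = 0) ∧
    (∀ b : R, π b ∈ rHnIn act' Set.univ → b ∈ rHnIn act Set.univ) := by

  have key : ∀ b : R, π b ∈ rHnIn act' Set.univ → b ∈ rHnIn act Set.univ := by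
    intro b hb
    refine ⟨trivial, ?_⟩
    intro x hx
    -- `π x` lies in the `H`-ideal of `R'` generated by `π b`
    have hπx : π x ∈ HIdealGenIn act' Set.univ (π b) := by
      intro J' hJ' hbJ'
      have hJ : IsHIdealIn act Set.univ (π ⁻¹' J') := by
        refine ⟨Set.subset_univ _, ?_, ?_, ?_, ?_, ?_⟩
        · show π 0 ∈ J'; rw [map_zero]; exact hJ'.2.1
        · intro u hu v hv; show π (u - v) ∈ J'; rw [map_sub]; exact hJ'.2.2.1 _ hu _ hv
        · intro cc u hu; show π (cc • u) ∈ J'; rw [map_smul]; exact hJ'.2.2.2.1 cc _ hu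
        · intro ss _ u hu
          constructor
          · show π (ss * u) ∈ J'; rw [map_mul]; exact (hJ'.2.2.2.2.1 (π ss) trivial _ hu).1
          · show π (u * ss) ∈ J'; rw [map_mul]; exact (hJ'.2.2.2.2.1 (π ss) trivial _ hu).2
        · intro hh u hu; show π (act hh u) ∈ J'; rw [hequiv]; exact hJ'.2.2.2.2.2 hh _ hu
      exact hx _ hJ hbJ'
    -- `π x` is `H`-regular in `R'`; lift the middle factors
    obtain ⟨n, h, h', b', -, heq⟩ := hb.2 (π x) hπx
    choose c hc using fun i => hsurj (b' i)
    set s : R := ∑ i, act (h i) x * c i * act (h' i) x with hs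
    have hπs : π s = π x := by
      rw [hs, map_sum, heq]
      refine Finset.sum_congr rfl fun i _ => ?_
      rw [map_mul, map_mul, hequiv, hequiv, hc]
    have hd : x - s ∈ rHnIn act Set.univ := (hker _).mp (by rw [map_sub, hπs, sub_self])
    have hdgen : x - s ∈ HIdealGenIn act Set.univ (x - s) := fun J _ hdJ => hdJ
    obtain ⟨m, g, g', e, -, hdeq⟩ := hd.2 _ hdgen
    -- membership of the ingredients in the relevant spans
    have hsmem : s ∈ Submodule.span k (GsetX act x) :=
      Submodule.sum_mem _ fun i _ => Submodule.subset_span ⟨h i, h' i, c i, rfl⟩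
    have hgsL : ∀ gg : H, act gg s ∈ Submodule.span k (LsetX act x) := by
      intro gg
      rw [hs, map_sum]
      exact Submodule.sum_mem _ fun i _ => act_gen_mem_L hma x gg _ _ _
    have hgsR : ∀ gg : H, act gg s ∈ Submodule.span k (RsetX act x) := by
      intro gg
      rw [hs, map_sum]
      exact Submodule.sum_mem _ fun i _ => act_gen_mem_R hma x gg _ _ _
    have hterm : ∀ j : Fin m, act (g j) (x - s) * e j * act (g' j) (x - s)
        ∈ Submodule.span k (GsetX act x) := by
      intro j
      rw [map_sub, map_sub]
      have expand : (act (g j) x - act (g j) s) * e j * (act (g' j) x - act (g' j) s)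
          = (act (g j) x * e j * act (g' j) x - act (g j) x * e j * act (g' j) s)
            - (act (g j) s * e j * act (g' j) x - act (g j) s * e j * act (g' j) s) := by
        rw [sub_mul, sub_mul, mul_sub, mul_sub]
      rw [expand]
      refine Submodule.sub_mem _ (Submodule.sub_mem _ ?_ ?_) (Submodule.sub_mem _ ?_ ?_)
      · exact Submodule.subset_span ⟨g j, g' j, e j, rfl⟩
      · exact Lset_mul_Rspan ⟨g j, e j, rfl⟩ (hgsR (g' j))
      · rw [mul_assoc]
        exact Lspan_mul_Rspan (hgsL (g j)) (Submodule.subset_span ⟨g' j, e j, rfl⟩)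
      · exact Lspan_mul_Rspan (Lspan_mul_right (hgsL (g j)) (e j)) (hgsR (g' j))
    have hxmem : x ∈ Submodule.span k (GsetX act x) := by
      have hmem2 : s + ∑ j, act (g j) (x - s) * e j * act (g' j) (x - s)
          ∈ Submodule.span k (GsetX act x) :=
        Submodule.add_mem _ hsmem (Submodule.sum_mem _ fun j _ => hterm j)
      have hxeq : s + ∑ j, act (g j) (x - s) * e j * act (g' j) (x - s) = x := by
        rw [← hdeq]; abel
      rwa [hxeq] at hmem2
    obtain ⟨N, hh, hh', bb, hrep⟩ := rep_of_mem_span hxmem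
    exact ⟨N, hh, hh', bb, fun i => trivial, hrep⟩
  refine ⟨?_, key⟩
  intro y hy
  obtain ⟨b, rfl⟩ := hsurj y
  exact (hker b).mpr (key b hy)
end

section
/- Let H be a Hopf algebra over a commutative ring k, R an H-module algebra, and I an H-ideal of R (so that I is itself an H-module algebra). Then r_Hn(I) = r_Hn(R) ∩ I; that is, the H-von Neumann regular radical is strongly hereditary. -/
open scoped TensorProduct

variable {k H R : Type*} [CommRing k] [Ring H] [HopfAlgebra k H]
  [NonUnitalRing R] [Module k R] [SMulCommClass k R R] [IsScalarTower k R R]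

/-!
Let `H` be a Hopf algebra over a commutative ring `k`, `R` an `H`-module algebra, and `I` an
`H`-ideal of `R` (so that `I` is itself an `H`-module algebra).  Then
`r_{Hn}(I) = r_{Hn}(R) ∩ I`; that is, the `H`-von Neumann regular radical is strongly
hereditary.
-/

/-! ### Auxiliary lemmas -/

/-- Closure of a `0`-containing, subtraction-closed set under finite sums. -/
lemma mem_sum_of_hideal {J : Set R} (h0 : (0 : R) ∈ J)
    (hsub : ∀ x ∈ J, ∀ y ∈ J, x - y ∈ J) {ι : Type*} {s : Finset ι} {f : ι → R}
    (hf : ∀ i ∈ s, f i ∈ J) : ∑ i ∈ s, f i ∈ J := by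
  have hadd : ∀ a ∈ J, ∀ b ∈ J, a + b ∈ J := fun a ha b hb => by
    have := hsub a ha (0 - b) (hsub 0 h0 b hb)
    simpa using this
  exact Finset.sum_induction f (· ∈ J) (fun a b ha hb => hadd a ha b hb) h0 hf

/-- `y` admits a representation `∑ᵢ (hᵢ · x) bᵢ (hᵢ' · x)` with middle factors in `S`. -/
def HasRep (act : H →ₗ[k] R →ₗ[k] R) (S : Set R) (x y : R) : Prop :=
  ∃ (n : ℕ) (h h' : Fin n → H) (b : Fin n → R),
    (∀ i, b i ∈ S) ∧ y = ∑ i, act (h i) x * b i * act (h' i) x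

lemma isHRegularIn_iff_hasRep {act : H →ₗ[k] R →ₗ[k] R} {S : Set R} {a : R} :
    IsHRegularIn act S a ↔ HasRep act S a a := Iff.rfl

lemma HasRep.zero {act : H →ₗ[k] R →ₗ[k] R} {S : Set R} {x : R} :
    HasRep act S x 0 :=
  ⟨0, Fin.elim0, Fin.elim0, Fin.elim0, fun i => i.elim0, by simp⟩

lemma HasRep.add {act : H →ₗ[k] R →ₗ[k] R} {S : Set R} {x y z : R}
    (hy : HasRep act S x y) (hz : HasRep act S x z) : HasRep act S x (y + z) := by
  obtain ⟨n, h, h', b, hb, ey⟩ := hy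
  obtain ⟨m, g, g', c, hc, ez⟩ := hz
  refine ⟨n + m, Fin.append h g, Fin.append h' g', Fin.append b c, ?_, ?_⟩
  · intro i
    induction i using Fin.addCases with
    | left j => rw [Fin.append_left]; exact hb j
    | right j => rw [Fin.append_right]; exact hc j
  · rw [Fin.sum_univ_add]
    simp only [Fin.append_left, Fin.append_right]
    rw [← ey, ← ez]

lemma HasRep.single {act : H →ₗ[k] R →ₗ[k] R} {S : Set R} {x : R}
    (g g' : H) {c : R} (hc : c ∈ S) : HasRep act S x (act g x * c * act g' x) :=
  ⟨1, fun _ => g, fun _ => g', fun _ => c, fun _ => hc, by simp⟩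

lemma HasRep.sum {act : H →ₗ[k] R →ₗ[k] R} {S : Set R} {x : R} {ι : Type*}
    {s : Finset ι} {f : ι → R} (hf : ∀ i ∈ s, HasRep act S x (f i)) :
    HasRep act S x (∑ i ∈ s, f i) :=
  Finset.sum_induction f (HasRep act S x) (fun _ _ => HasRep.add) HasRep.zero hf

/-- Expansion of the action on a product whose right factor is in the image of the action. -/
lemma act_mul_act {act : H →ₗ[k] R →ₗ[k] R} (hma : IsModuleAlgebra act)
    (g g' : H) (w x : R) :
    ∃ T : Finset (H × H),
      act g (w * act g' x) = ∑ p ∈ T, act p.1 w * act (p.2 * g') x := by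
  obtain ⟨T, hT⟩ := TensorProduct.exists_finset (R := k) (Coalgebra.comul (R := k) g)
  refine ⟨T, ?_⟩
  rw [hma.2.2 g w (act g' x), hT, map_sum, map_sum]
  refine Finset.sum_congr rfl fun p _ => ?_
  rw [TensorProduct.map_tmul, LinearMap.mul'_apply, LinearMap.flip_apply,
    LinearMap.flip_apply, hma.2.1]

/-- If `x` lies in an `H`-ideal `I` of `R` and is `H`-regular in `R`, then it is
`H`-regular in `I`. -/
lemma isHRegularIn_of_mem {act : H →ₗ[k] R →ₗ[k] R} (hma : IsModuleAlgebra act)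
    {I : Set R} (hI : IsHIdealIn act Set.univ I) {x : R} (hx : x ∈ I)
    (hreg : IsHRegularIn act Set.univ x) : IsHRegularIn act I x := by
  obtain ⟨n, h, h', b, -, e⟩ := hreg
  rw [isHRegularIn_iff_hasRep]
  nth_rewrite 2 [e]
  refine HasRep.sum fun i _ => ?_
  have e2 : act (h' i) x = ∑ j, act (h' i) (act (h j) x * b j * act (h' j) x) := by
    rw [← map_sum]; exact congrArg (act (h' i)) e
  rw [e2, Finset.mul_sum]
  refine HasRep.sum fun j _ => ?_
  obtain ⟨T, hT⟩ := act_mul_act hma (h' i) (h' j) (act (h j) x * b j) x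
  rw [hT, Finset.mul_sum]
  refine HasRep.sum fun p _ => ?_
  have hmem : b i * act p.1 (act (h j) x * b j) ∈ I := by
    have h1 : act (h j) x ∈ I := hI.2.2.2.2.2 (h j) x hx
    have h2 : act (h j) x * b j ∈ I := (hI.2.2.2.2.1 (b j) trivial _ h1).2
    have h3 : act p.1 (act (h j) x * b j) ∈ I := hI.2.2.2.2.2 p.1 _ h2
    exact (hI.2.2.2.2.1 (b i) trivial _ h3).1
  have := HasRep.single (act := act) (x := x) (h i) (p.2 * h' j) hmem
  simpa [mul_assoc] using this

theorem rHn_strongly_hereditary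
    (act : H →ₗ[k] R →ₗ[k] R) (hma : IsModuleAlgebra act)
    (I : Set R) (hI : IsHIdealIn act Set.univ I) :
    rHnIn act I = rHnIn act Set.univ ∩ I := by
  obtain ⟨-, h0, hsub, hsmul, hmul, hact⟩ := hI
  have hII : IsHIdealIn act I I :=
    ⟨subset_rfl, h0, hsub, hsmul, fun s _ x hx => hmul s trivial x hx, hact⟩
  ext a
  simp only [Set.mem_inter_iff]
  constructor
  · rintro ⟨haI, hreg⟩
    refine ⟨⟨trivial, ?_⟩, haI⟩
    set D := HIdealGenIn act I a with hD
    have hDI : D ⊆ I := fun x hx => hx I hII haI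
    have haD : a ∈ D := fun J _ hJ => hJ
    have hD0 : (0 : R) ∈ D := fun J hJ _ => hJ.2.1
    have hDsub : ∀ x ∈ D, ∀ y ∈ D, x - y ∈ D :=
      fun x hx y hy J hJ haJ => hJ.2.2.1 x (hx J hJ haJ) y (hy J hJ haJ)
    have hDsmul : ∀ (c : k), ∀ x ∈ D, c • x ∈ D :=
      fun c x hx J hJ haJ => hJ.2.2.2.1 c x (hx J hJ haJ)
    have hDmulI : ∀ s ∈ I, ∀ x ∈ D, s * x ∈ D ∧ x * s ∈ D :=
      fun s hs x hx =>
        ⟨fun J hJ haJ => (hJ.2.2.2.2.1 s hs x (hx J hJ haJ)).1,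
         fun J hJ haJ => (hJ.2.2.2.2.1 s hs x (hx J hJ haJ)).2⟩
    have hDact : ∀ (g : H), ∀ x ∈ D, act g x ∈ D :=
      fun g x hx J hJ haJ => hJ.2.2.2.2.2 g x (hx J hJ haJ)
    -- `D` is an `H`-ideal of `R` itself, because each of its elements is `H`-regular in `I`.
    have hDuniv : IsHIdealIn act Set.univ D := by
      refine ⟨fun _ _ => trivial, hD0, hDsub, hDsmul, ?_, hDact⟩
      intro s _ x hx
      obtain ⟨n, h, h', b, hb, e⟩ := hreg x hx
      constructor
      · have : ∀ i : Fin n, s * (act (h i) x * b i * act (h' i) x) ∈ D := by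
          intro i
          have h1 : act (h i) x ∈ I := hact (h i) x (hDI hx)
          have h2 : s * act (h i) x ∈ I := (hmul s trivial _ h1).1
          have h3 : s * act (h i) x * b i ∈ I := (hII.2.2.2.2.1 (b i) (hb i) _ h2).2
          have h4 : act (h' i) x ∈ D := hDact (h' i) x hx
          have h5 := (hDmulI _ h3 _ h4).1
          have e5 : s * (act (h i) x * b i * act (h' i) x)
              = s * act (h i) x * b i * act (h' i) x := by
            rw [mul_assoc, mul_assoc, mul_assoc]
          rw [e5]; exact h5
        have e6 : s * x = ∑ i, s * (act (h i) x * b i * act (h' i) x) := by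
          rw [← Finset.mul_sum, ← e]
        rw [e6]; exact mem_sum_of_hideal hD0 hDsub fun i _ => this i
      · have : ∀ i : Fin n, act (h i) x * b i * act (h' i) x * s ∈ D := by
          intro i
          have h1 : act (h' i) x ∈ I := hact (h' i) x (hDI hx)
          have h2 : act (h' i) x * s ∈ I := (hmul s trivial _ h1).2
          have h3 : b i * (act (h' i) x * s) ∈ I := (hII.2.2.2.2.1 (b i) (hb i) _ h2).1
          have h4 : act (h i) x ∈ D := hDact (h i) x hx
          have h5 := (hDmulI _ h3 _ h4).2
          have e5 : act (h i) x * b i * act (h' i) x * s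
              = act (h i) x * (b i * (act (h' i) x * s)) := by
            rw [mul_assoc, mul_assoc]
          rw [e5]; exact h5
        have e6 : x * s = ∑ i, act (h i) x * b i * act (h' i) x * s := by
          rw [← Finset.sum_mul, ← e]
        rw [e6]; exact mem_sum_of_hideal hD0 hDsub fun i _ => this i
    intro x hxgen
    have hxD : x ∈ D := hxgen D hDuniv haD
    obtain ⟨n, h, h', b, hb, e⟩ := hreg x hxD
    exact ⟨n, h, h', b, fun i => trivial, e⟩
  · rintro ⟨⟨-, hreg⟩, haI⟩
    refine ⟨haI, fun x hxgen => ?_⟩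
    have hxI : x ∈ I := hxgen I hII haI
    have hxR : x ∈ HIdealGenIn act Set.univ a := by
      intro J hJ haJ
      have hJI : IsHIdealIn act I (J ∩ I) := by
        refine ⟨Set.inter_subset_right, ⟨hJ.2.1, h0⟩, ?_, ?_, ?_, ?_⟩
        · exact fun u hu v hv => ⟨hJ.2.2.1 u hu.1 v hv.1, hsub u hu.2 v hv.2⟩
        · exact fun c u hu => ⟨hJ.2.2.2.1 c u hu.1, hsmul c u hu.2⟩
        · intro s hs u hu
          exact ⟨⟨(hJ.2.2.2.2.1 s trivial u hu.1).1, (hmul s trivial u hu.2).1⟩,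
            ⟨(hJ.2.2.2.2.1 s trivial u hu.1).2, (hmul s trivial u hu.2).2⟩⟩
        · exact fun g u hu => ⟨hJ.2.2.2.2.2 g u hu.1, hact g u hu.2⟩
      exact (hxgen (J ∩ I) hJI ⟨haJ, haI⟩).1
    exact isHRegularIn_of_mem hma ⟨fun _ _ => trivial, h0, hsub, hsmul, hmul, hact⟩ hxI
      (hreg x hxR)
end

section
/- Let G be a finite group, k a field, and R a unital k-algebra graded by G, R = ⊕_{g ∈ G} R_g. Then R is Gr-regular (for every g ∈ G and every homogeneous element a ∈ R_g there exists b ∈ R with a = a b a) if and only if every element a ∈ R is H-regular for H = (kG)*, i.e., every a ∈ R can be written as a finite sum a = Σᵢ a_{xᵢ} bᵢ a_{yᵢ} where xᵢ, yᵢ ∈ G, bᵢ ∈ R, and a_g denotes the homogeneous component of a in R_g. -/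
open DirectSum

section Aux

variable {k R G : Type*} [Field k] [Ring R] [Algebra k R]
  [AddGroup G] [DecidableEq G]

lemma aux_sum_decompose [Fintype G] (𝒜 : G → Submodule k R) [GradedAlgebra 𝒜] (a : R) :
    ∑ h : G, (decompose 𝒜 a h : R) = a := by
  classical
  conv_rhs => rw [← DirectSum.sum_support_decompose 𝒜 a]
  exact (Finset.sum_subset (Finset.subset_univ _) (fun h _ hh => by
    rw [DFinsupp.notMem_support_iff.mp hh, ZeroMemClass.coe_zero])).symm

lemma aux_sandwich [Fintype G] (𝒜 : G → Submodule k R) [GradedAlgebra 𝒜]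
    (hreg : ∀ (g : G), ∀ a ∈ 𝒜 g, ∃ b : R, a = a * b * a)
    (g : G) (a : R) (ha : a ∈ 𝒜 g) : ∃ b ∈ 𝒜 (-g), a = a * b * a := by
  obtain ⟨b, hb⟩ := hreg g a ha
  refine ⟨(decompose 𝒜 b (-g) : R), SetLike.coe_mem _, ?_⟩
  have hb' : a * b * a = ∑ h : G, a * (decompose 𝒜 b h : R) * a := by
    conv_lhs => rw [← aux_sum_decompose 𝒜 b]
    rw [Finset.mul_sum, Finset.sum_mul]
  have key : (decompose 𝒜 (a * b * a) g : R) = a * (decompose 𝒜 b (-g) : R) * a := by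
    rw [hb', ← GradedRing.proj_apply, map_sum]
    rw [Finset.sum_eq_single (-g)]
    · rw [GradedRing.proj_apply]
      have hm : a * (decompose 𝒜 b (-g) : R) * a ∈ 𝒜 (g + -g + g) :=
        SetLike.mul_mem_graded (SetLike.mul_mem_graded ha (SetLike.coe_mem _)) ha
      rw [add_neg_cancel, zero_add] at hm
      exact DirectSum.decompose_of_mem_same 𝒜 hm
    · intro h _ hne
      rw [GradedRing.proj_apply]
      refine DirectSum.decompose_of_mem_ne 𝒜
        (SetLike.mul_mem_graded (SetLike.mul_mem_graded ha (SetLike.coe_mem _)) ha) ?_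
      intro hc
      apply hne
      have h1 : g + h = 0 := by
        have h2 : (g + h) + g = 0 + g := by rw [zero_add]; exact hc
        exact add_right_cancel h2
      exact eq_neg_of_add_eq_zero_right h1
    · intro h; exact absurd (Finset.mem_univ _) h
  calc a = (decompose 𝒜 a g : R) := (DirectSum.decompose_of_mem_same 𝒜 ha).symm
    _ = (decompose 𝒜 (a * b * a) g : R) := by rw [← hb]
    _ = a * (decompose 𝒜 b (-g) : R) * a := key

lemma aux_idem_right (𝒜 : G → Submodule k R) [GradedAlgebra 𝒜]
    (hreg0 : ∀ v ∈ 𝒜 (0:G), ∃ c ∈ 𝒜 (0:G), v = v * c * v)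
    (E : G → R) (hE0 : ∀ g, E g ∈ 𝒜 0)
    (s : Finset G) :
    ∃ e, e ∈ 𝒜 0 ∧ e * e = e ∧ (∀ g ∈ s, e * E g = E g) ∧
      ∃ c : G → R, e = ∑ g ∈ s, E g * c g := by
  classical
  induction s using Finset.induction_on with
  | empty => exact ⟨0, zero_mem _, by simp, by simp, 0, by simp⟩
  | @insert g s hgs ih =>
    obtain ⟨e, he0, hee, heE, c, hc⟩ := ih
    obtain ⟨v, hv⟩ : ∃ v : R, v = E g - e * E g := ⟨_, rfl⟩
    have hv0 : v ∈ 𝒜 0 := by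
      rw [hv]
      refine sub_mem (hE0 g) ?_
      have := SetLike.mul_mem_graded he0 (hE0 g)
      rwa [zero_add] at this
    obtain ⟨cc, hcc0, hvcv⟩ := hreg0 v hv0
    have hev : e * v = 0 := by
      rw [hv, mul_sub, ← mul_assoc, hee, sub_self]
    obtain ⟨f, hf⟩ : ∃ f : R, f = v * cc := ⟨_, rfl⟩
    have hf0 : f ∈ 𝒜 0 := by
      rw [hf]
      have := SetLike.mul_mem_graded hv0 hcc0; rwa [zero_add] at this
    have hff : f * f = f := by rw [hf, ← mul_assoc, ← hvcv]
    have hef : e * f = 0 := by rw [hf, ← mul_assoc, hev, zero_mul]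
    have hfv : f * v = v := by rw [hf]; exact hvcv.symm
    refine ⟨e + (f - f * e), ?_, ?_, ?_, ?_⟩
    · exact add_mem he0 (sub_mem hf0 (by
        have := SetLike.mul_mem_graded hf0 he0; rwa [zero_add] at this))
    · have h1 : (f - f * e) * e = 0 := by rw [sub_mul, mul_assoc, hee, sub_self]
      have h2 : e * (f - f * e) = 0 := by
        rw [mul_sub, hef, ← mul_assoc, hef, zero_mul, sub_zero]
      have hfef : f * e * f = 0 := by rw [mul_assoc, hef, mul_zero]
      have h3 : (f - f * e) * (f - f * e) = f - f * e := by
        have e3 : (f * e) * (f * e) = 0 := by rw [← mul_assoc, hfef, zero_mul]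
        rw [sub_mul, mul_sub, mul_sub, hff, ← mul_assoc f f e, hff, hfef, e3]
        abel
      rw [add_mul, mul_add, mul_add, hee, h1, h2, h3]
      abel
    · intro g' hg'
      rcases Finset.mem_insert.mp hg' with rfl | hg's
      · have hfEg : (f - f * e) * E g' = v := by
          rw [sub_mul, mul_assoc, ← mul_sub, ← hv, hfv]
        rw [add_mul, hfEg, hv]
        abel
      · have h4 : e * E g' = E g' := heE g' hg's
        rw [add_mul, h4, sub_mul, mul_assoc, h4, sub_self, add_zero]
    · obtain ⟨t, ht⟩ : ∃ t : R, t = cc * (1 - e) := ⟨_, rfl⟩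
      have hfe : f - f * e = v * t := by
        rw [hf, ht, mul_sub, mul_one, mul_sub, ← mul_assoc]
      set c' : G → R := fun x => if x = g then t else c x - c x * (E g * t) with hc'
      have hc'g : c' g = t := if_pos rfl
      have hc'x : ∀ x ∈ s, c' x = c x - c x * (E g * t) :=
        fun x hx => if_neg (by rintro rfl; exact hgs hx)
      refine ⟨c', ?_⟩
      rw [Finset.sum_insert hgs, hc'g,
        Finset.sum_congr rfl (fun x hx => by rw [hc'x x hx])]
      have hterm : ∑ x ∈ s, E x * (c x - c x * (E g * t)) =
          ∑ x ∈ s, (E x * c x - E x * c x * (E g * t)) := by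
        refine Finset.sum_congr rfl fun x hx => ?_
        rw [mul_sub, mul_assoc]
      rw [hterm, Finset.sum_sub_distrib, ← Finset.sum_mul, ← hc, hfe, hv, sub_mul,
        mul_assoc]
      abel

lemma aux_idem_left (𝒜 : G → Submodule k R) [GradedAlgebra 𝒜]
    (hreg0 : ∀ v ∈ 𝒜 (0:G), ∃ c ∈ 𝒜 (0:G), v = v * c * v)
    (F : G → R) (hF0 : ∀ g, F g ∈ 𝒜 0)
    (s : Finset G) :
    ∃ e, e ∈ 𝒜 0 ∧ e * e = e ∧ (∀ g ∈ s, F g * e = F g) ∧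
      ∃ d : G → R, e = ∑ g ∈ s, d g * F g := by
  classical
  induction s using Finset.induction_on with
  | empty => exact ⟨0, zero_mem _, by simp, by simp, 0, by simp⟩
  | @insert g s hgs ih =>
    obtain ⟨e, he0, hee, heF, d, hd⟩ := ih
    obtain ⟨v, hv⟩ : ∃ v : R, v = F g - F g * e := ⟨_, rfl⟩
    have hv0 : v ∈ 𝒜 0 := by
      rw [hv]
      refine sub_mem (hF0 g) ?_
      have := SetLike.mul_mem_graded (hF0 g) he0
      rwa [zero_add] at this
    obtain ⟨cc, hcc0, hvcv⟩ := hreg0 v hv0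
    have hve : v * e = 0 := by
      rw [hv, sub_mul, mul_assoc, hee, sub_self]
    obtain ⟨f, hf⟩ : ∃ f : R, f = cc * v := ⟨_, rfl⟩
    have hf0 : f ∈ 𝒜 0 := by
      rw [hf]
      have := SetLike.mul_mem_graded hcc0 hv0; rwa [zero_add] at this
    have hff : f * f = f := by
      rw [hf, mul_assoc, ← mul_assoc v cc v, ← hvcv]
    have hfe : f * e = 0 := by rw [hf, mul_assoc, hve, mul_zero]
    have hvf : v * f = v := by rw [hf, ← mul_assoc]; exact hvcv.symm
    refine ⟨e + (f - e * f), ?_, ?_, ?_, ?_⟩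
    · exact add_mem he0 (sub_mem hf0 (by
        have := SetLike.mul_mem_graded he0 hf0; rwa [zero_add] at this))
    · have h1 : e * (f - e * f) = 0 := by
        rw [mul_sub, ← mul_assoc, hee, sub_self]
      have h2 : (f - e * f) * e = 0 := by
        rw [sub_mul, hfe, mul_assoc, hfe, mul_zero, sub_zero]
      have e1 : f * (e * f) = 0 := by rw [← mul_assoc, hfe, zero_mul]
      have e2 : (e * f) * f = e * f := by rw [mul_assoc, hff]
      have e3 : (e * f) * (e * f) = 0 := by
        rw [mul_assoc, ← mul_assoc f e f, hfe, zero_mul, mul_zero]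
      have h3 : (f - e * f) * (f - e * f) = f - e * f := by
        rw [sub_mul, mul_sub, mul_sub, hff, e1, e2, e3]
        abel
      rw [mul_add, add_mul, add_mul, hee, h1, h2, h3]
      abel
    · intro g' hg'
      rcases Finset.mem_insert.mp hg' with rfl | hg's
      · have hFgf : F g' * (f - e * f) = v := by
          rw [mul_sub, ← mul_assoc, ← sub_mul, ← hv, hvf]
        rw [mul_add, hFgf, hv]
        abel
      · have h4 : F g' * e = F g' := heF g' hg's
        rw [mul_add, h4, mul_sub, ← mul_assoc, h4, sub_self, add_zero]
    · obtain ⟨t, ht⟩ : ∃ t : R, t = (1 - e) * cc := ⟨_, rfl⟩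
      have hfe' : f - e * f = t * v := by
        rw [hf, ht, sub_mul, one_mul, sub_mul, mul_assoc]
      set d' : G → R := fun x => if x = g then t else d x - t * (F g * d x) with hd'
      have hd'g : d' g = t := if_pos rfl
      have hd'x : ∀ x ∈ s, d' x = d x - t * (F g * d x) :=
        fun x hx => if_neg (by rintro rfl; exact hgs hx)
      refine ⟨d', ?_⟩
      rw [Finset.sum_insert hgs, hd'g,
        Finset.sum_congr rfl (fun x hx => by rw [hd'x x hx])]
      have hterm : ∑ x ∈ s, (d x - t * (F g * d x)) * F x =
          ∑ x ∈ s, (d x * F x - t * (F g * (d x * F x))) := by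
        refine Finset.sum_congr rfl fun x hx => ?_
        rw [sub_mul, mul_assoc, mul_assoc]
      rw [hterm, Finset.sum_sub_distrib, ← hd, ← Finset.mul_sum, ← Finset.mul_sum,
        ← hd, hfe', hv, mul_sub]
      abel

end Aux


/-!
Let `G` be a finite group, `k` a field, and `R` a unital `k`-algebra graded by `G`
(written additively), `R = ⊕_{g ∈ G} R_g`.  Then `R` is Gr-regular (for every `g ∈ G` and
every homogeneous element `a ∈ R_g` there exists `b ∈ R` with `a = a b a`) if and only if
every element `a ∈ R` is `H`-regular for `H = (kG)*`, i.e. every `a ∈ R` can be written as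
a finite sum `a = ∑ᵢ a_{xᵢ} bᵢ a_{yᵢ}` where `xᵢ, yᵢ ∈ G`, `bᵢ ∈ R`, and `a_g` denotes the
homogeneous component of `a` in `R_g`.
-/
theorem grRegular_iff_dualGroupAlgebra_regular
    {k R G : Type*} [Field k] [Ring R] [Algebra k R]
    [AddGroup G] [Fintype G] [DecidableEq G]
    (𝒜 : G → Submodule k R) [GradedAlgebra 𝒜] :
    (∀ (g : G), ∀ a ∈ 𝒜 g, ∃ b : R, a = a * b * a) ↔
    (∀ a : R, ∃ (n : ℕ) (x y : Fin n → G) (b : Fin n → R),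
      a = ∑ i, (DirectSum.decompose 𝒜 a (x i) : R) * b i *
        (DirectSum.decompose 𝒜 a (y i) : R)) := by
  constructor
  · intro hreg a
    classical
    have hreg0 : ∀ v ∈ 𝒜 (0:G), ∃ c ∈ 𝒜 (0:G), v = v * c * v := by
      intro v hv
      obtain ⟨c, hc, h⟩ := aux_sandwich 𝒜 hreg 0 v hv
      rw [neg_zero] at hc
      exact ⟨c, hc, h⟩
    have hsum : ∑ g : G, (decompose 𝒜 a g : R) = a := aux_sum_decompose 𝒜 a
    have hA : ∀ g, (decompose 𝒜 a g : R) ∈ 𝒜 g := fun g => SetLike.coe_mem _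
    choose w hw0 hw using fun g => aux_sandwich 𝒜 hreg g _ (hA g)
    have hE0 : ∀ g, ((decompose 𝒜 a g : R) * w g) ∈ 𝒜 0 := fun g => by
      have := SetLike.mul_mem_graded (hA g) (hw0 g)
      rwa [add_neg_cancel] at this
    have hF0 : ∀ g, (w g * (decompose 𝒜 a g : R)) ∈ 𝒜 0 := fun g => by
      have := SetLike.mul_mem_graded (hw0 g) (hA g)
      rwa [neg_add_cancel] at this
    obtain ⟨e, -, -, heE, c, hc⟩ :=
      aux_idem_right 𝒜 hreg0 (fun g => (decompose 𝒜 a g : R) * w g) hE0 Finset.univ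
    obtain ⟨f, -, -, hfF, d, hd⟩ :=
      aux_idem_left 𝒜 hreg0 (fun g => w g * (decompose 𝒜 a g : R)) hF0 Finset.univ
    have hea : e * a = a := by
      conv_lhs => rw [← hsum]
      rw [Finset.mul_sum]
      have hterm : ∀ g : G, e * (decompose 𝒜 a g : R) = (decompose 𝒜 a g : R) := by
        intro g
        have h5 : e * ((decompose 𝒜 a g : R) * w g) = (decompose 𝒜 a g : R) * w g :=
          heE g (Finset.mem_univ g)
        conv_lhs => rw [hw g]
        rw [← mul_assoc, h5, ← hw g]
      rw [Finset.sum_congr rfl (fun g _ => hterm g), hsum]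
    have haf : a * f = a := by
      conv_lhs => rw [← hsum]
      rw [Finset.sum_mul]
      have hterm : ∀ g : G, (decompose 𝒜 a g : R) * f = (decompose 𝒜 a g : R) := by
        intro g
        have h5 : (w g * (decompose 𝒜 a g : R)) * f = w g * (decompose 𝒜 a g : R) :=
          hfF g (Finset.mem_univ g)
        conv_lhs => rw [hw g]
        rw [mul_assoc, mul_assoc, ← mul_assoc (w g), h5, ← mul_assoc, ← hw g]
      rw [Finset.sum_congr rfl (fun g _ => hterm g), hsum]
    have key : a = ∑ p : G × G, (decompose 𝒜 a p.1 : R) *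
        (w p.1 * c p.1 * a * d p.2 * w p.2) * (decompose 𝒜 a p.2 : R) := by
      calc a = e * (a * f) := by rw [haf, hea]
        _ = _ := by
          rw [hc, hd, Finset.mul_sum, Finset.sum_mul_sum, Fintype.sum_prod_type]
          refine Finset.sum_congr rfl fun g _ => Finset.sum_congr rfl fun h _ => ?_
          simp only [mul_assoc]
    refine ⟨Fintype.card (G × G),
      fun i => ((Fintype.equivFin (G × G)).symm i).1,
      fun i => ((Fintype.equivFin (G × G)).symm i).2,
      fun i => w ((Fintype.equivFin (G × G)).symm i).1 * c ((Fintype.equivFin (G × G)).symm i).1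
        * a * d ((Fintype.equivFin (G × G)).symm i).2 * w ((Fintype.equivFin (G × G)).symm i).2,
      ?_⟩
    exact key.trans (Equiv.sum_comp (Fintype.equivFin (G × G)).symm
      (fun p => (decompose 𝒜 a p.1 : R) * (w p.1 * c p.1 * a * d p.2 * w p.2) *
        (decompose 𝒜 a p.2 : R))).symm
  · intro h g a ha
    classical
    obtain ⟨n, x, y, b, hb⟩ := h a
    refine ⟨∑ i, if x i = g ∧ y i = g then b i else 0, ?_⟩
    rw [Finset.mul_sum, Finset.sum_mul]
    conv_lhs => rw [hb]
    refine Finset.sum_congr rfl fun i _ => ?_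
    by_cases hx : x i = g
    · by_cases hy : y i = g
      · rw [hx, hy, DirectSum.decompose_of_mem_same 𝒜 ha]
        simp
      · rw [DirectSum.decompose_of_mem_ne 𝒜 ha (fun hgy => hy hgy.symm)]
        simp [hy]
    · rw [DirectSum.decompose_of_mem_ne 𝒜 ha (fun hgx => hx hgx.symm)]
      simp [hx]
end

section
/- Let H be a Hopf algebra over a commutative ring k weakly acting on k-algebras R and R', and let f : R → R' be a surjective k-algebra homomorphism commuting with the H-actions (f(h · a) = h · f(a)). If a ∈ R is H-m-nilpotent, then f(a) is H-m-nilpotent in R'. In particular, if every element of R is H-m-nilpotent, then every element of R' is H-m-nilpotent. -/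
open scoped TensorProduct

variable {k H R : Type*} [CommRing k] [Ring H] [HopfAlgebra k H]

section

variable {A : Type*} [NonUnitalRing A] [Module k A]
  [SMulCommClass k A A] [IsScalarTower k A A]

/-- `H` weakly acts on `A` via the `k`-bilinear action `act`: `1_H · a = a` and
`h · (a b) = ∑ (h₁ · a)(h₂ · b)` (the right-hand side being the image of `Δ(h)` under
`h₁ ⊗ h₂ ↦ (h₁ · a)(h₂ · b)`). -/
def IsWeakAction (act : H →ₗ[k] A →ₗ[k] A) : Prop :=
  (∀ r : A, act 1 r = r) ∧
  (∀ (h : H) (a b : A),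
    act h (a * b) =
      LinearMap.mul' k A
        (TensorProduct.map (act.flip a) (act.flip b) (Coalgebra.comul h)))

/-- `a` is `H`-`m`-nilpotent: every `H`-`m`-sequence beginning at `a`, i.e. every sequence
with `s 0 = a` and `s (n+1) = (h_n · s n) b_n (h_n' · s n)` for some `h_n, h_n' ∈ H`,
`b_n ∈ A`, eventually reaches `0`. -/
def IsHmNilpotent (act : H →ₗ[k] A →ₗ[k] A) (a : A) : Prop :=
  ∀ s : ℕ → A, s 0 = a →
    (∀ n : ℕ, ∃ (h h' : H) (b : A), s (n + 1) = act h (s n) * b * act h' (s n)) →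
    ∃ m : ℕ, s m = 0

end

/-!
Let `H` be a Hopf algebra over a commutative ring `k` weakly acting on `k`-algebras `R` and
`R'`, and let `f : R → R'` be a surjective `k`-algebra homomorphism commuting with the
`H`-actions.  If `a ∈ R` is `H`-`m`-nilpotent, then `f a` is `H`-`m`-nilpotent in `R'`.
In particular, if every element of `R` is `H`-`m`-nilpotent, then every element of `R'` is
`H`-`m`-nilpotent.
-/
theorem isHmNilpotent_surjective_image
    [NonUnitalRing R] [Module k R] [SMulCommClass k R R] [IsScalarTower k R R]
    {R' : Type*} [NonUnitalRing R'] [Module k R']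
    [SMulCommClass k R' R'] [IsScalarTower k R' R']
    (act : H →ₗ[k] R →ₗ[k] R) (act' : H →ₗ[k] R' →ₗ[k] R')
    (hwa : IsWeakAction act) (hwa' : IsWeakAction act')
    (f : R →ₙₐ[k] R') (hsurj : Function.Surjective f)
    (hequiv : ∀ (h : H) (a : R), f (act h a) = act' h (f a)) :
    (∀ a : R, IsHmNilpotent act a → IsHmNilpotent act' (f a)) ∧
    ((∀ a : R, IsHmNilpotent act a) → ∀ a' : R', IsHmNilpotent act' a') := by
  have main : ∀ a : R, IsHmNilpotent act a → IsHmNilpotent act' (f a) := by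
    intro a ha s' hs0 hstep
    have key : ∀ n (x : R), f x = s' n →
        ∃ y : R, f y = s' (n + 1) ∧ ∃ h h' b, y = act h x * b * act h' x := by
      intro n x hx
      obtain ⟨h, h', b', hb⟩ := hstep n
      obtain ⟨b, hbf⟩ := hsurj b'
      exact ⟨act h x * b * act h' x,
        by rw [map_mul, map_mul, hequiv, hequiv, hx, hbf, hb], h, h', b, rfl⟩
    let t : ∀ n : ℕ, {x : R // f x = s' n} := fun n =>
      Nat.rec ⟨a, hs0.symm⟩
        (fun n p => ⟨(key n p.1 p.2).choose, (key n p.1 p.2).choose_spec.1⟩) n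
    obtain ⟨m, hm⟩ := ha (fun n => (t n).1) rfl
      (fun n => (key n (t n).1 (t n).2).choose_spec.2)
    exact ⟨m, by rw [← (t m).2, hm, map_zero]⟩
  refine ⟨main, fun hall a' => ?_⟩
  obtain ⟨a, rfl⟩ := hsurj a'
  exact main a (hall a)
end
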